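/- arXiv:0904.1781 — 2 statements merged into one kernel-verified Lean document; each statement's English description precedes it below -/
import Mathlib

section
/- Let q ∈ ℝ, let α, β, γ ≥ 0, and set F(u,η) = |u|^α |η|^β (2π − |η|)^γ e^{−¼(|u||η|)²}. Then for every C₀ > 0 there is a constant C (depending only on q, α, β, γ, C₀, n, m) with the following property: whenever u ∈ ℝ^{2n}, η ∈ ℝ^m, and 1 ≤ τ₀ ≤ τ₁ ≤ τ₂ ≤ 2π/|η| satisfy |u||η| ≥ 1 and p_1(Φ(u, tη)) A(u, tη) ≤ C₀ F(u, tη) for all t ∈ [τ₁, τ₂], then ∫_{τ₁}^{τ₂} p_1(Φ(u, tη)) A(u, tη) t^q dt ≤ C τ₀^{q−1} (|u||η|)^{−2} F(u, τ₀η). -/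
open scoped RealInnerProductSpace
open MeasureTheory

noncomputable section

/-- The underlying space of an H-type group: `ℝ^{2n} × ℝ^m`. -/
abbrev Gp (n m : ℕ) : Type :=
  EuclideanSpace ℝ (Fin (2 * n)) × EuclideanSpace ℝ (Fin m)

/-- The data of an H-type group structure on `ℝ^{2n} × ℝ^m`: a skew-symmetric bilinear
bracket whose image spans `ℝ^m`, together with the maps `J_z` determined by
`⟪J_z x, y⟫ = ⟪z, [x,y]⟫`, which are orthogonal for `|z| = 1`. -/
structure HTypeData (n m : ℕ) : Type where
  bracket : EuclideanSpace ℝ (Fin (2 * n)) →ₗ[ℝ]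
    EuclideanSpace ℝ (Fin (2 * n)) →ₗ[ℝ] EuclideanSpace ℝ (Fin m)
  skew : ∀ x y, bracket x y = - bracket y x
  spans : Submodule.span ℝ {z | ∃ x y, bracket x y = z} = ⊤
  J : EuclideanSpace ℝ (Fin m) →ₗ[ℝ]
    EuclideanSpace ℝ (Fin (2 * n)) →ₗ[ℝ] EuclideanSpace ℝ (Fin (2 * n))
  J_def : ∀ z x y, ⟪J z x, y⟫ = ⟪z, bracket x y⟫
  J_orth : ∀ z, ‖z‖ = 1 → ∀ x, ‖J z x‖ = ‖x‖

namespace HTypeData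

variable {n m : ℕ}

/-- The group operation `g ⋆ h = g + h + ½[g,h]`. -/
def mul (H : HTypeData n m) (g h : Gp n m) : Gp n m :=
  (g.1 + h.1, g.2 + h.2 + (1 / 2 : ℝ) • H.bracket g.1 h.1)

/-- The left-invariant vector field `X_i` applied to `f`; note that
`Σ_j ⟪J_{u_j} x, e_i⟫ u_j = [x, e_i]`. -/
def X (H : HTypeData n m) (i : Fin (2 * n)) (f : Gp n m → ℝ) (g : Gp n m) : ℝ :=
  fderiv ℝ f g
    (EuclideanSpace.single i 1, (1 / 2 : ℝ) • H.bracket g.1 (EuclideanSpace.single i 1))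

/-- The right-invariant vector field `X̂_i` applied to `f`. -/
def Xhat (H : HTypeData n m) (i : Fin (2 * n)) (f : Gp n m → ℝ) (g : Gp n m) : ℝ :=
  fderiv ℝ f g
    (EuclideanSpace.single i 1, (-(1 / 2) : ℝ) • H.bracket g.1 (EuclideanSpace.single i 1))

/-- The left-invariant horizontal (sub)gradient `∇f = (X_1 f, …, X_{2n} f)`. -/
def grad (H : HTypeData n m) (f : Gp n m → ℝ) (g : Gp n m) :
    EuclideanSpace ℝ (Fin (2 * n)) :=
  WithLp.toLp 2 (fun i => H.X i f g)

/-- The right-invariant horizontal (sub)gradient `∇̂f = (X̂_1 f, …, X̂_{2n} f)`. -/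
def gradHat (H : HTypeData n m) (f : Gp n m → ℝ) (g : Gp n m) :
    EuclideanSpace ℝ (Fin (2 * n)) :=
  WithLp.toLp 2 (fun i => H.Xhat i f g)

end HTypeData

/-- The Euclidean gradient in the `z`-variables. -/
def gradZ {n m : ℕ} (f : Gp n m → ℝ) (g : Gp n m) : EuclideanSpace ℝ (Fin m) :=
  WithLp.toLp 2 (fun j => fderiv ℝ f g (0, EuclideanSpace.single j 1))

/-- The heat kernel
`p_t(x,z) = (2π)^{-m} (4π)^{-n} ∫_{ℝ^m} e^{i⟨λ,z⟩ - ¼|λ| coth(t|λ|) |x|²} (|λ|/sinh(t|λ|))^n dλ`. -/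
def heatKernel (n m : ℕ) (t : ℝ) (g : Gp n m) : ℝ :=
  ((2 * Real.pi) ^ m)⁻¹ * ((4 * Real.pi) ^ n)⁻¹ *
    ∫ lam : EuclideanSpace ℝ (Fin m),
      (Complex.exp (Complex.I * (⟪lam, g.2⟫ : ℂ) -
          ((1 / 4 * ‖lam‖ * (Real.cosh (t * ‖lam‖) / Real.sinh (t * ‖lam‖)) * ‖g.1‖ ^ 2 : ℝ) : ℂ)) *
        (((‖lam‖ / Real.sinh (t * ‖lam‖)) ^ n : ℝ) : ℂ)).re

namespace HTypeData

variable {n m : ℕ}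

/-- The heat semigroup `P_t f(g) = ∫_G f(g ⋆ k) p_t(k) dm(k)` (with `P_0` the identity). -/
def Pt (H : HTypeData n m) (t : ℝ) (f : Gp n m → ℝ) (g : Gp n m) : ℝ :=
  if t = 0 then f g else ∫ k : Gp n m, f (H.mul g k) * heatKernel n m t k

/-- `L` is the length of some horizontal path from `g` to `h`:
`γ̇(t) = Σ_i a_i(t) X_i(γ(t)) = (a(t), ½[γ(t)_x, a(t)])` and `L = ∫_0^1 ‖a(t)‖ dt`. -/
def IsHorizLength (H : HTypeData n m) (g h : Gp n m) (L : ℝ) : Prop :=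
  ∃ (γ : ℝ → Gp n m) (a : ℝ → EuclideanSpace ℝ (Fin (2 * n))),
    γ 0 = g ∧ γ 1 = h ∧
    (∀ t ∈ Set.Icc (0 : ℝ) 1,
      HasDerivWithinAt γ ((a t, (1 / 2 : ℝ) • H.bracket (γ t).1 (a t)) : Gp n m)
        (Set.Icc (0 : ℝ) 1) t) ∧
    IntervalIntegrable (fun t => ‖a t‖) volume 0 1 ∧
    L = ∫ t in (0 : ℝ)..1, ‖a t‖

/-- The Carnot–Carathéodory distance. -/
def ccDist (H : HTypeData n m) (g h : Gp n m) : ℝ :=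
  sInf {L | H.IsHorizLength g h L}

/-- The class `𝒞` of `C¹` functions with
`|f(g)| + |∇f(g)| + |∇̂f(g)| ≤ M e^{a d(0,g)^{2-ε}}`. -/
def ClassC (H : HTypeData n m) (f : Gp n m → ℝ) : Prop :=
  ContDiff ℝ 1 f ∧
  ∃ M a ε : ℝ, 0 ≤ M ∧ 0 ≤ a ∧ 0 < ε ∧ ε < 1 ∧
    ∀ g : Gp n m, |f g| + ‖H.grad f g‖ + ‖H.gradHat f g‖ ≤
      M * Real.exp (a * H.ccDist 0 g ^ ((2 : ℝ) - ε))

/-- The Carnot–Carathéodory unit ball `B`. -/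
def ccBall (H : HTypeData n m) : Set (Gp n m) := {g | H.ccDist 0 g ≤ 1}

/-- The average `m_f` of `f` over the unit ball `B`. -/
def mAvg (H : HTypeData n m) (f : Gp n m → ℝ) : ℝ :=
  (∫ g in H.ccBall, f g) / (volume H.ccBall).toReal

/-- The geodesic coordinates map `Φ`. -/
def Phi (H : HTypeData n m) (u : EuclideanSpace ℝ (Fin (2 * n)))
    (η : EuclideanSpace ℝ (Fin m)) : Gp n m :=
  ((1 - Real.cos ‖η‖) • u + (Real.sin ‖η‖ / ‖η‖) • H.J η u,
    (‖u‖ ^ 2 / 2 * (1 - Real.sin ‖η‖ / ‖η‖)) • η)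

end HTypeData

/-- The Jacobian determinant `A(u,η)` of `Φ`. -/
def Afun (n m : ℕ) (u : EuclideanSpace ℝ (Fin (2 * n)))
    (η : EuclideanSpace ℝ (Fin m)) : ℝ :=
  ‖u‖ ^ (2 * m) * (1 / 2 - Real.sin ‖η‖ / (2 * ‖η‖)) ^ (m - 1) *
    (2 - 2 * Real.cos ‖η‖) ^ (n - 1) *
    (2 - 2 * Real.cos ‖η‖ - ‖η‖ * Real.sin ‖η‖)

end

/-!
Along the ray `t ↦ t η` the weight `F(u, t η) t^q` is controlled by its value at `τ₀`:
the factor `(2π - t|η|)^γ` decreases, the ratio `(t/τ₀)^{β+q}` of the power factors is at most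
`exp (|β+q| (t - τ₀))`, and with `r = |u||η| ≥ 1` the Gaussian factor equals
`exp (-r²τ₀²/4) exp (-(r²τ₀/2)(t - τ₀)) exp (-r²(t - τ₀)²/4)`. The last factor absorbs the
exponential growth at the price `exp |β+q|²`, so the integrand is dominated by an exponential
of rate `r²τ₀/2`, whose integral over `[τ₁, τ₂] ⊆ [τ₀, ∞)` is at most `2 / (r²τ₀)`.
-/

open Real

theorem Real.rpow_le_exp_abs_mul_sub_one {x : ℝ} (p : ℝ) (hx : 1 ≤ x) :
    x ^ p ≤ exp (|p| * (x - 1)) :=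
  calc x ^ p ≤ x ^ |p| := rpow_le_rpow_of_exponent_le hx (le_abs_self p)
    _ = exp (log x * |p|) := rpow_def_of_pos (by linarith) _
    _ ≤ exp (|p| * (x - 1)) := by
      rw [mul_comm]
      gcongr
      exact log_le_sub_one_of_pos (by linarith)

theorem exp_mul_exp_neg_sq_le {κ r τ₀ t : ℝ} (hr : 1 ≤ r) :
    exp (κ * (t - τ₀)) * exp (-(1 / 4) * (r * t) ^ 2) ≤
      exp (κ ^ 2) * exp (-(1 / 4) * (r * τ₀) ^ 2) * exp (-(r ^ 2 * τ₀ / 2) * (t - τ₀)) := by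
  simp only [← exp_add]
  refine exp_le_exp.2 ?_
  -- with `s = t - τ₀` the gap of the exponents is `(κ - s/2)² + (r² - 1) s²/4`
  nlinarith [sq_nonneg ((t - τ₀) / 2 - κ),
    mul_nonneg (sub_nonneg.2 (one_le_pow₀ (n := 2) hr)) (sq_nonneg (t - τ₀))]

theorem integral_exp_neg_mul_sub_le {c τ₀ τ₁ τ₂ : ℝ} (hc : 0 < c) (h₀₁ : τ₀ ≤ τ₁) :
    ∫ t in τ₁..τ₂, exp (-c * (t - τ₀)) ≤ c⁻¹ := by
  have hF (t : ℝ) :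
      HasDerivAt (fun t => -c⁻¹ * exp (-c * (t - τ₀))) (exp (-c * (t - τ₀))) t :=
    ((((hasDerivAt_id' t).sub_const τ₀).const_mul (-c)).exp.const_mul (-c⁻¹)).congr_deriv
      (by field_simp)
  rw [intervalIntegral.integral_eq_sub_of_hasDerivAt (fun t _ => hF t)
    (by apply Continuous.intervalIntegrable; fun_prop)]
  have h₁ : exp (-c * (τ₁ - τ₀)) ≤ 1 := exp_le_one_iff.2 (by nlinarith)
  have h₂ := exp_pos (-c * (τ₂ - τ₀))
  have hc' := inv_pos.2 hc
  nlinarith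

theorem intervalIntegral.integral_le_of_forall_le {f g : ℝ → ℝ} {a b : ℝ} (hab : a ≤ b)
    (hg : IntervalIntegrable g volume a b) (hg₀ : 0 ≤ ∫ t in a..b, g t)
    (hfg : ∀ t ∈ Set.Icc a b, f t ≤ g t) : ∫ t in a..b, f t ≤ ∫ t in a..b, g t := by
  by_cases hf : IntervalIntegrable f volume a b
  · exact intervalIntegral.integral_mono_on hab hf hg hfg
  · rwa [intervalIntegral.integral_undef hf]

/-- The weight `F(u, η)` of the estimate, as a function of `ρ = |u|` and `x = |η|`. -/
noncomputable def regionWeight (α β γ ρ x : ℝ) : ℝ :=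
  ρ ^ α * x ^ β * (2 * π - x) ^ γ * exp (-(1 / 4) * (ρ * x) ^ 2)

theorem regionWeight_nonneg (α β γ : ℝ) {ρ x : ℝ} (hρ : 0 ≤ ρ) (hx : 0 ≤ x) (hx₂ : x ≤ 2 * π) :
    0 ≤ regionWeight α β γ ρ x := by
  unfold regionWeight
  have := rpow_nonneg hρ α
  have := rpow_nonneg hx β
  have := rpow_nonneg (sub_nonneg.2 hx₂) γ
  positivity

theorem regionWeight_mul_rpow_le {α β γ q ρ x τ₀ t : ℝ} (hγ : 0 ≤ γ) (hx : 0 < x)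
    (hρx : 1 ≤ ρ * x) (hτ₀ : 1 ≤ τ₀) (ht : τ₀ ≤ t) (htx : t * x ≤ 2 * π) :
    regionWeight α β γ ρ (t * x) * t ^ q ≤
      exp (|β + q| ^ 2) * τ₀ ^ q * regionWeight α β γ ρ (τ₀ * x) *
        exp (-((ρ * x) ^ 2 * τ₀ / 2) * (t - τ₀)) := by
  have hτ₀0 : 0 < τ₀ := by linarith
  have ht0 : 0 < t := by linarith
  have hρ : 0 ≤ ρ := (pos_of_mul_pos_left (by linarith) hx.le).le
  have hratio : 1 ≤ t / τ₀ := (one_le_div hτ₀0).2 ht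
  have hpow : (t * x) ^ β * t ^ q = (t / τ₀) ^ (β + q) * ((τ₀ * x) ^ β * τ₀ ^ q) := by
    rw [div_rpow ht0.le hτ₀0.le, rpow_add ht0, rpow_add hτ₀0, mul_rpow ht0.le hx.le,
      mul_rpow hτ₀0.le hx.le]
    field_simp
  have hgrowth : (t / τ₀) ^ (β + q) ≤ exp (|β + q| * (t - τ₀)) := by
    refine (rpow_le_exp_abs_mul_sub_one _ hratio).trans (exp_le_exp.2 ?_)
    have : t / τ₀ - 1 ≤ t - τ₀ := by
      rw [div_sub_one hτ₀0.ne']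
      exact div_le_self (by linarith) hτ₀
    exact mul_le_mul_of_nonneg_left this (abs_nonneg _)
  have hgap : (2 * π - t * x) ^ γ ≤ (2 * π - τ₀ * x) ^ γ := by gcongr
  have hgauss := exp_mul_exp_neg_sq_le (κ := |β + q|) (τ₀ := τ₀) (t := t) hρx
  have hgap₀ : 0 ≤ (2 * π - τ₀ * x) ^ γ := rpow_nonneg (by nlinarith) γ
  have hρα : 0 ≤ ρ ^ α := rpow_nonneg hρ α
  have hτ₀xβ : 0 ≤ (τ₀ * x) ^ β := rpow_nonneg (by positivity) β
  calc regionWeight α β γ ρ (t * x) * t ^ q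
      = ρ ^ α * (2 * π - t * x) ^ γ * ((τ₀ * x) ^ β * τ₀ ^ q) *
          ((t / τ₀) ^ (β + q) * exp (-(1 / 4) * (ρ * x * t) ^ 2)) := by
        rw [regionWeight, show ρ * (t * x) = ρ * x * t by ring]
        linear_combination
          (ρ ^ α * (2 * π - t * x) ^ γ * exp (-(1 / 4) * (ρ * x * t) ^ 2)) * hpow
    _ ≤ ρ ^ α * (2 * π - τ₀ * x) ^ γ * ((τ₀ * x) ^ β * τ₀ ^ q) *
          (exp (|β + q| * (t - τ₀)) * exp (-(1 / 4) * (ρ * x * t) ^ 2)) := by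
        gcongr
    _ ≤ ρ ^ α * (2 * π - τ₀ * x) ^ γ * ((τ₀ * x) ^ β * τ₀ ^ q) *
          (exp (|β + q| ^ 2) * exp (-(1 / 4) * (ρ * x * τ₀) ^ 2) *
            exp (-((ρ * x) ^ 2 * τ₀ / 2) * (t - τ₀))) := by
        gcongr
    _ = _ := by
        rw [regionWeight, show ρ * (τ₀ * x) = ρ * x * τ₀ by ring]
        ring

theorem integral_mul_rpow_le_of_le_regionWeight {f : ℝ → ℝ} {α β γ q C₀ ρ x τ₀ τ₁ τ₂ : ℝ}
    (hγ : 0 ≤ γ) (hC₀ : 0 ≤ C₀) (hx : 0 < x) (hρx : 1 ≤ ρ * x) (hτ₀ : 1 ≤ τ₀) (h₀₁ : τ₀ ≤ τ₁)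
    (h₁₂ : τ₁ ≤ τ₂) (h₂ : τ₂ * x ≤ 2 * π)
    (hf : ∀ t ∈ Set.Icc τ₁ τ₂, f t ≤ C₀ * regionWeight α β γ ρ (t * x)) :
    ∫ t in τ₁..τ₂, f t * t ^ q ≤
      2 * C₀ * exp (|β + q| ^ 2) * τ₀ ^ (q - 1) / (ρ * x) ^ 2 * regionWeight α β γ ρ (τ₀ * x) := by
  have hτ₀0 : 0 < τ₀ := by linarith
  have hρ : 0 < ρ := pos_of_mul_pos_left (by linarith) hx.le
  set c := (ρ * x) ^ 2 * τ₀ / 2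
  set D := C₀ * exp (|β + q| ^ 2) * τ₀ ^ q * regionWeight α β γ ρ (τ₀ * x)
  have hD : 0 ≤ D := by
    have := regionWeight_nonneg α β γ hρ.le (by positivity : 0 ≤ τ₀ * x)
      (le_trans (by gcongr; linarith) h₂)
    have := rpow_nonneg hτ₀0.le q
    positivity
  have hpoint : ∀ t ∈ Set.Icc τ₁ τ₂, f t * t ^ q ≤ D * exp (-c * (t - τ₀)) := by
    intro t ht
    have hτ₀t : τ₀ ≤ t := h₀₁.trans ht.1
    calc f t * t ^ q ≤ C₀ * regionWeight α β γ ρ (t * x) * t ^ q :=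
          mul_le_mul_of_nonneg_right (hf t ht) (rpow_nonneg (by linarith) q)
      _ ≤ C₀ * (exp (|β + q| ^ 2) * τ₀ ^ q * regionWeight α β γ ρ (τ₀ * x) *
            exp (-c * (t - τ₀))) := by
          rw [mul_assoc]
          exact mul_le_mul_of_nonneg_left (regionWeight_mul_rpow_le hγ hx hρx hτ₀ hτ₀t
            (le_trans (by gcongr; exact ht.2) h₂)) hC₀
      _ = D * exp (-c * (t - τ₀)) := by ring
  calc ∫ t in τ₁..τ₂, f t * t ^ q ≤ ∫ t in τ₁..τ₂, D * exp (-c * (t - τ₀)) :=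
        intervalIntegral.integral_le_of_forall_le h₁₂
          (by apply Continuous.intervalIntegrable; fun_prop)
          (intervalIntegral.integral_nonneg h₁₂ fun t _ => by positivity) hpoint
    _ = D * ∫ t in τ₁..τ₂, exp (-c * (t - τ₀)) := intervalIntegral.integral_const_mul _ _
    _ ≤ D * c⁻¹ := by gcongr; exact integral_exp_neg_mul_sub_le (by positivity) h₀₁
    _ = _ := by
        rw [rpow_sub_one hτ₀0.ne']
        simp only [c, D]
        field_simp

theorem single_region_estimate_general (n m : ℕ) (H : HTypeData n m)
    (q α β γ : ℝ) (hγ : 0 ≤ γ) (C₀ : ℝ) (hC₀ : 0 < C₀) :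
    ∃ C : ℝ, ∀ (u : EuclideanSpace ℝ (Fin (2 * n))) (η : EuclideanSpace ℝ (Fin m))
      (τ₀ τ₁ τ₂ : ℝ), 1 ≤ τ₀ → τ₀ ≤ τ₁ → τ₁ ≤ τ₂ → τ₂ ≤ 2 * Real.pi / ‖η‖ →
      1 ≤ ‖u‖ * ‖η‖ →
      (∀ t ∈ Set.Icc τ₁ τ₂,
        heatKernel n m 1 (H.Phi u (t • η)) * Afun n m u (t • η) ≤
          C₀ * (‖u‖ ^ α * ‖t • η‖ ^ β * (2 * Real.pi - ‖t • η‖) ^ γ *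
            Real.exp (-(1 / 4) * (‖u‖ * ‖t • η‖) ^ 2))) →
      (∫ t in τ₁..τ₂, heatKernel n m 1 (H.Phi u (t • η)) * Afun n m u (t • η) * t ^ q) ≤
        C * τ₀ ^ (q - 1) / (‖u‖ * ‖η‖) ^ 2 *
          (‖u‖ ^ α * ‖τ₀ • η‖ ^ β * (2 * Real.pi - ‖τ₀ • η‖) ^ γ *
            Real.exp (-(1 / 4) * (‖u‖ * ‖τ₀ • η‖) ^ 2)) := by
  refine ⟨2 * C₀ * exp (|β + q| ^ 2), fun u η τ₀ τ₁ τ₂ hτ₀ h₀₁ h₁₂ h₂ hr hbound => ?_⟩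
  have hη : 0 < ‖η‖ := pos_of_mul_pos_right (by linarith) (norm_nonneg u)
  rw [norm_smul_of_nonneg (by linarith : (0 : ℝ) ≤ τ₀)]
  refine integral_mul_rpow_le_of_le_regionWeight hγ hC₀.le hη hr hτ₀ h₀₁ h₁₂
    ((le_div_iff₀ hη).1 h₂) fun t ht => ?_
  rw [← norm_smul_of_nonneg (by linarith [ht.1] : (0 : ℝ) ≤ t)]
  exact hbound t ht

/-- Estimate of the integral of `p₁ A t^q` along a portion of a geodesic lying in a single
region where `p₁ A ≲ F`, with `F(u,η) = |u|^α |η|^β (2π-|η|)^γ e^{-¼(|u||η|)²}`. -/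
theorem single_region_estimate (n m : ℕ) (hn : 1 ≤ n) (hm : 1 ≤ m) (H : HTypeData n m)
    (q α β γ : ℝ) (hα : 0 ≤ α) (hβ : 0 ≤ β) (hγ : 0 ≤ γ) (C₀ : ℝ) (hC₀ : 0 < C₀) :
    ∃ C : ℝ, ∀ (u : EuclideanSpace ℝ (Fin (2 * n))) (η : EuclideanSpace ℝ (Fin m))
      (τ₀ τ₁ τ₂ : ℝ), 1 ≤ τ₀ → τ₀ ≤ τ₁ → τ₁ ≤ τ₂ → τ₂ ≤ 2 * Real.pi / ‖η‖ →
      1 ≤ ‖u‖ * ‖η‖ →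
      (∀ t ∈ Set.Icc τ₁ τ₂,
        heatKernel n m 1 (H.Phi u (t • η)) * Afun n m u (t • η) ≤
          C₀ * (‖u‖ ^ α * ‖t • η‖ ^ β * (2 * Real.pi - ‖t • η‖) ^ γ *
            Real.exp (-(1 / 4) * (‖u‖ * ‖t • η‖) ^ 2))) →
      (∫ t in τ₁..τ₂, heatKernel n m 1 (H.Phi u (t • η)) * Afun n m u (t • η) * t ^ q) ≤
        C * τ₀ ^ (q - 1) / (‖u‖ * ‖η‖) ^ 2 *
          (‖u‖ ^ α * ‖τ₀ • η‖ ^ β * (2 * Real.pi - ‖τ₀ • η‖) ^ γ *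
            Real.exp (-(1 / 4) * (‖u‖ * ‖τ₀ • η‖) ^ 2)) :=
  single_region_estimate_general n m H q α β γ hγ C₀ hC₀
end

section
/- For x ∈ ℝ^{2n} with x ≠ 0, let T(x) = |x|^{−2} Σ_{j=1}^m (J_{u_j} x)(J_{u_j} x)^T ∈ M_{2n×2n}. Then: (i) T(x) is the orthogonal projection of ℝ^{2n} onto the m-dimensional subspace spanned by the mutually orthogonal vectors J_{u_1} x, …, J_{u_m} x, so T(x) x = 0, T(x) J_z x = J_z x for every z ∈ ℝ^m, and the operator norm of T(x) is 1; (ii) the divergence ∇·T(x), whose k-th component is Σ_{ℓ=1}^{2n} X_ℓ a_{kℓ}(x) where a_{kℓ} are the entries of T, satisfies |∇·T(x)| ≤ 3m(2n)²/|x|; (iii) if f is a C¹ radial function on G (i.e. f(x,z) depends only on |x| and |z|), then T(x) ∇f(x,z) = ½(∇ − ∇̂)f(x,z) = ½ J_{∇_z f(x,z)} x for all x ≠ 0, z ≠ 0. -/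
/-!
The vectors `J_{u_j} x` are pairwise orthogonal of length `‖x‖`, so
`T(x) v = ‖x‖⁻² Σ_j ⟪J_{u_j} x, v⟫ J_{u_j} x` is the orthogonal projection onto their span, and
`x` is orthogonal to that span because `⟪J_z x, x⟫ = ⟪z, [x,x]⟫ = 0`. The entries of `T(y)` are
quadratic forms in `y` divided by `‖y‖²`, homogeneous of degree `0`, so their derivatives at `x`
are `O(1/‖x‖)`. Finally `∇f = ∇_x f + ½ J_{∇_z f} x` and `∇̂f = ∇_x f - ½ J_{∇_z f} x`; for radial
`f` the `x`-gradient is orthogonal to every `J_z x`, hence killed by `T(x)`.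
-/

open scoped RealInnerProductSpace
open MeasureTheory

noncomputable section

/-- The matrix `T(x) = |x|⁻² Σ_j (J_{u_j} x)(J_{u_j} x)^T`. -/
def Tmat {n m : ℕ} (H : HTypeData n m) (x : EuclideanSpace ℝ (Fin (2 * n))) :
    Matrix (Fin (2 * n)) (Fin (2 * n)) ℝ :=
  fun k l => (‖x‖ ^ 2)⁻¹ *
    ∑ j : Fin m,
      H.J (EuclideanSpace.single j 1) x k * H.J (EuclideanSpace.single j 1) x l

/-- A matrix applied to a Euclidean vector. -/
def matApply {k : ℕ} (M : Matrix (Fin k) (Fin k) ℝ) (v : EuclideanSpace ℝ (Fin k)) :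
    EuclideanSpace ℝ (Fin k) :=
  WithLp.toLp 2 (fun i => ∑ l, M i l * v l)

/-- The divergence `∇·T`, whose `k`-th component is `Σ_ℓ X_ℓ a_{kℓ}`. -/
def divT {n m : ℕ} (H : HTypeData n m) (g : Gp n m) : EuclideanSpace ℝ (Fin (2 * n)) :=
  WithLp.toLp 2 (fun k => ∑ l, H.X l (fun h => Tmat H h.1 k l) g)

end

open WithLp (toLp)

namespace EuclideanSpace

variable {ι : Type*} [Fintype ι]

theorem norm_le_sqrt_card_mul {v : EuclideanSpace ℝ ι} {C : ℝ} (h : ∀ i, |v i| ≤ C) :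
    ‖v‖ ≤ √(Fintype.card ι) * C := by
  rcases isEmpty_or_nonempty ι with hι | ⟨⟨i⟩⟩
  · simp [Subsingleton.elim v 0]
  · have hC : 0 ≤ C := (abs_nonneg _).trans (h i)
    rw [EuclideanSpace.norm_eq, ← Real.sqrt_sq hC, ← Real.sqrt_mul (Nat.cast_nonneg _)]
    gcongr
    calc ∑ i, ‖v i‖ ^ 2 ≤ ∑ _i : ι, C ^ 2 :=
          Finset.sum_le_sum fun i _ => pow_le_pow_left₀ (norm_nonneg _) (h i) 2
      _ = Fintype.card ι * C ^ 2 := by simp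

variable [DecidableEq ι]

theorem apply_eq_inner (L : EuclideanSpace ℝ ι →ₗ[ℝ] ℝ) (w : EuclideanSpace ℝ ι) :
    L w = ⟪toLp 2 fun i => L (single i 1), w⟫ := by
  conv_lhs => rw [← (basisFun ι ℝ).sum_repr w]
  simp [PiLp.inner_apply]

end EuclideanSpace

section Calculus

variable {E F : Type*} [NormedAddCommGroup E] [NormedSpace ℝ E]
  [NormedAddCommGroup F] [NormedSpace ℝ F]

theorem fderiv_apply_eq_zero_of_forall_add_smul_eq_sub_smul {f : E → F} {p v : E}
    (h : ∀ t : ℝ, f (p + t • v) = f (p - t • v)) : fderiv ℝ f p v = 0 := by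
  by_cases hf : DifferentiableAt ℝ f p
  · have h_neg : lineDeriv ℝ f p v = lineDeriv ℝ f p (-v) := by
      simp only [lineDeriv, smul_neg, ← sub_eq_add_neg, h]
    rw [lineDeriv_neg, ← sub_eq_zero, sub_neg_eq_add, ← two_smul ℝ, smul_eq_zero] at h_neg
    rw [← hf.lineDeriv_eq_fderiv]
    exact h_neg.resolve_left two_ne_zero
  · simp [fderiv_zero_of_not_differentiableAt hf]

end Calculus

section HomogeneousQuotient

variable {E : Type*} [NormedAddCommGroup E] [InnerProductSpace ℝ E]

theorem HasFDerivAt.inv_norm_sq_mul {g : E → ℝ} {g' : E →L[ℝ] ℝ} {x : E}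
    (hg : HasFDerivAt g g' x) (hx : x ≠ 0) :
    HasFDerivAt (fun y => (‖y‖ ^ 2)⁻¹ * g y)
      ((‖x‖ ^ 2)⁻¹ • g' - (2 * g x / ‖x‖ ^ 4) • innerSL ℝ x) x := by
  have hinv : HasFDerivAt (fun y : E => (‖y‖ ^ 2)⁻¹)
      ((-((‖x‖ ^ 2) ^ 2)⁻¹) • (2 • innerSL ℝ x)) x :=
    (hasDerivAt_inv (by positivity)).comp_hasFDerivAt x (hasStrictFDerivAt_norm_sq x).hasFDerivAt
  refine (hinv.mul hg).congr_fderiv (ContinuousLinearMap.ext fun e => ?_)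
  simp only [sub_apply, add_apply, smul_apply, smul_eq_mul, coe_innerSL_apply, nsmul_eq_mul,
    Nat.cast_ofNat]
  ring

theorem abs_fderiv_inv_norm_sq_mul_le {g : E → ℝ} {g' : E →L[ℝ] ℝ} {x : E}
    (hg : HasFDerivAt g g' x) (hx : x ≠ 0) {M : ℝ} (hgx : |g x| ≤ M * ‖x‖ ^ 2)
    (hg' : ∀ e, |g' e| ≤ 2 * M * ‖x‖ * ‖e‖) (e : E) :
    |fderiv ℝ (fun y => (‖y‖ ^ 2)⁻¹ * g y) x e| ≤ 4 * M * ‖e‖ / ‖x‖ := by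
  have hr : 0 < ‖x‖ := norm_pos_iff.mpr hx
  have hprod : |g x * ⟪x, e⟫| ≤ M * ‖x‖ ^ 2 * (‖x‖ * ‖e‖) := by
    rw [abs_mul]
    exact mul_le_mul hgx (abs_real_inner_le_norm x e) (abs_nonneg _) ((abs_nonneg _).trans hgx)
  rw [(hg.inv_norm_sq_mul hx).fderiv]
  calc |((‖x‖ ^ 2)⁻¹ • g' - (2 * g x / ‖x‖ ^ 4) • innerSL ℝ x) e|
      ≤ |g' e| / ‖x‖ ^ 2 + 2 * |g x * ⟪x, e⟫| / ‖x‖ ^ 4 := by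
        simp only [sub_apply, smul_apply, smul_eq_mul, coe_innerSL_apply]
        refine (abs_sub _ _).trans_eq ?_
        rw [abs_mul, abs_mul, abs_div, abs_mul, abs_two, abs_inv,
          abs_of_pos (by positivity : (0 : ℝ) < ‖x‖ ^ 2),
          abs_of_pos (by positivity : (0 : ℝ) < ‖x‖ ^ 4), abs_mul]
        ring
    _ ≤ 2 * M * ‖x‖ * ‖e‖ / ‖x‖ ^ 2 + 2 * (M * ‖x‖ ^ 2 * (‖x‖ * ‖e‖)) / ‖x‖ ^ 4 := by
        gcongr
        exact hg' e
    _ = 4 * M * ‖e‖ / ‖x‖ := by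
        field_simp
        ring

variable {ι : Type*} [Fintype ι]

theorem hasFDerivAt_sum_mul (a b : ι → E →L[ℝ] ℝ) (x : E) :
    HasFDerivAt (fun y => ∑ i, a i y * b i y) (∑ i, (a i x • b i + b i x • a i)) x :=
  HasFDerivAt.fun_sum fun i _ => (a i).hasFDerivAt.mul (b i).hasFDerivAt

theorem abs_fderiv_inv_norm_sq_mul_sum_le (a b : ι → E →L[ℝ] ℝ)
    (ha : ∀ i y, |a i y| ≤ ‖y‖) (hb : ∀ i y, |b i y| ≤ ‖y‖) {x : E} (hx : x ≠ 0) (e : E) :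
    |fderiv ℝ (fun y => (‖y‖ ^ 2)⁻¹ * ∑ i, a i y * b i y) x e| ≤
      4 * Fintype.card ι * ‖e‖ / ‖x‖ := by
  refine abs_fderiv_inv_norm_sq_mul_le (hasFDerivAt_sum_mul a b x) hx ?_ (fun e => ?_) e
  · calc |∑ i, a i x * b i x| ≤ ∑ i, |a i x * b i x| := Finset.abs_sum_le_sum_abs _ _
      _ ≤ ∑ _i : ι, ‖x‖ ^ 2 := Finset.sum_le_sum fun i _ => by
          rw [abs_mul, sq]; exact mul_le_mul (ha i x) (hb i x) (abs_nonneg _) (norm_nonneg _)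
      _ = Fintype.card ι * ‖x‖ ^ 2 := by simp
  · simp only [FunLike.coe_sum, Finset.sum_apply, add_apply, smul_apply, smul_eq_mul]
    calc |∑ i, (a i x * b i e + b i x * a i e)| ≤ ∑ i, |a i x * b i e + b i x * a i e| :=
          Finset.abs_sum_le_sum_abs _ _
      _ ≤ ∑ _i : ι, 2 * ‖x‖ * ‖e‖ := Finset.sum_le_sum fun i _ => by
          refine (abs_add_le _ _).trans ?_
          rw [abs_mul, abs_mul]
          nlinarith [mul_le_mul (ha i x) (hb i e) (abs_nonneg _) (norm_nonneg _),
            mul_le_mul (hb i x) (ha i e) (abs_nonneg _) (norm_nonneg _)]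
      _ = 2 * Fintype.card ι * ‖x‖ * ‖e‖ := by simp; ring

end HomogeneousQuotient

namespace HTypeData

variable {n m : ℕ} (H : HTypeData n m)

theorem norm_J_apply (z : EuclideanSpace ℝ (Fin m)) (x : EuclideanSpace ℝ (Fin (2 * n))) :
    ‖H.J z x‖ = ‖z‖ * ‖x‖ := by
  rcases eq_or_ne z 0 with rfl | hz
  · simp
  · have hz' : ‖z‖ ≠ 0 := norm_ne_zero_iff.mpr hz
    have hunit : ‖‖z‖⁻¹ • z‖ = 1 := by rw [norm_smul, norm_inv, norm_norm, inv_mul_cancel₀ hz']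
    have h := H.J_orth _ hunit x
    rw [map_smul, LinearMap.smul_apply, norm_smul, norm_inv, norm_norm,
      inv_mul_eq_iff_eq_mul₀ hz'] at h
    exact h

theorem bracket_self (x : EuclideanSpace ℝ (Fin (2 * n))) : H.bracket x x = 0 := by
  have h := H.skew x x
  rwa [← sub_eq_zero, sub_neg_eq_add, ← two_smul ℝ, smul_eq_zero,
    or_iff_right two_ne_zero] at h

theorem inner_J_apply_self (z : EuclideanSpace ℝ (Fin m)) (x : EuclideanSpace ℝ (Fin (2 * n))) :
    ⟪H.J z x, x⟫ = 0 := by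
  rw [H.J_def, bracket_self, inner_zero_right]

/-- Polarization of `‖J_z x‖ = ‖z‖ ‖x‖`. -/
theorem inner_J_apply_J_apply (z w : EuclideanSpace ℝ (Fin m))
    (x : EuclideanSpace ℝ (Fin (2 * n))) :
    ⟪H.J z x, H.J w x⟫ = ⟪z, w⟫ * ‖x‖ ^ 2 := by
  have h := norm_add_sq_real (H.J z x) (H.J w x)
  rw [← LinearMap.add_apply, ← map_add, norm_J_apply, norm_J_apply, norm_J_apply, mul_pow,
    mul_pow, mul_pow, norm_add_sq_real] at h
  linarith

theorem J_apply_apply (z : EuclideanSpace ℝ (Fin m)) (x : EuclideanSpace ℝ (Fin (2 * n)))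
    (i : Fin (2 * n)) : H.J z x i = ⟪z, H.bracket x (EuclideanSpace.single i 1)⟫ := by
  rw [← H.J_def, EuclideanSpace.inner_single_right, one_mul, conj_trivial]

theorem inner_J_single_apply (j j' : Fin m) (x : EuclideanSpace ℝ (Fin (2 * n))) :
    ⟪H.J (EuclideanSpace.single j 1) x, H.J (EuclideanSpace.single j' 1) x⟫ =
      if j = j' then ‖x‖ ^ 2 else 0 := by
  rw [inner_J_apply_J_apply, EuclideanSpace.inner_single_left]
  by_cases h : j = j' <;> simp [h]

theorem orthonormal_J_single {x : EuclideanSpace ℝ (Fin (2 * n))} (hx : x ≠ 0) :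
    Orthonormal ℝ fun j : Fin m => ‖x‖⁻¹ • H.J (EuclideanSpace.single j 1) x := by
  rw [orthonormal_iff_ite]
  intro j j'
  rw [real_inner_smul_left, real_inner_smul_right, inner_J_single_apply]
  split_ifs
  · field_simp
  · simp

theorem linearIndependent_J_single {x : EuclideanSpace ℝ (Fin (2 * n))} (hx : x ≠ 0) :
    LinearIndependent ℝ fun j : Fin m => H.J (EuclideanSpace.single j 1) x :=
  LinearIndependent.of_comp ((‖x‖⁻¹ : ℝ) • (LinearMap.id :
    EuclideanSpace ℝ (Fin (2 * n)) →ₗ[ℝ] EuclideanSpace ℝ (Fin (2 * n))))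
    (H.orthonormal_J_single hx).linearIndependent

def Jspan (x : EuclideanSpace ℝ (Fin (2 * n))) : Submodule ℝ (EuclideanSpace ℝ (Fin (2 * n))) :=
  Submodule.span ℝ (Set.range fun j : Fin m => H.J (EuclideanSpace.single j 1) x)

theorem finrank_Jspan {x : EuclideanSpace ℝ (Fin (2 * n))} (hx : x ≠ 0) :
    Module.finrank ℝ (H.Jspan x) = m := by
  rw [Jspan, finrank_span_eq_card (H.linearIndependent_J_single hx), Fintype.card_fin]

theorem J_apply_mem_Jspan (z : EuclideanSpace ℝ (Fin m)) (x : EuclideanSpace ℝ (Fin (2 * n))) :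
    H.J z x ∈ H.Jspan x := by
  rw [← (EuclideanSpace.basisFun (Fin m) ℝ).sum_repr z, map_sum, LinearMap.sum_apply]
  refine Submodule.sum_mem _ fun j _ => ?_
  rw [map_smul, LinearMap.smul_apply, EuclideanSpace.basisFun_apply]
  exact Submodule.smul_mem _ _ (Submodule.subset_span ⟨j, rfl⟩)

end HTypeData

section Tmat

variable {n m : ℕ} (H : HTypeData n m)

theorem matApply_eq_toLpLin {k : ℕ} (M : Matrix (Fin k) (Fin k) ℝ)
    (v : EuclideanSpace ℝ (Fin k)) : matApply M v = Matrix.toLpLin 2 2 M v :=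
  rfl

theorem matApply_Tmat (x v : EuclideanSpace ℝ (Fin (2 * n))) :
    matApply (Tmat H x) v = (‖x‖ ^ 2)⁻¹ •
      ∑ j, ⟪H.J (EuclideanSpace.single j 1) x, v⟫ • H.J (EuclideanSpace.single j 1) x := by
  ext i
  simp only [matApply, Tmat, PiLp.smul_apply, WithLp.ofLp_sum, Finset.sum_apply,
    PiLp.inner_apply, smul_eq_mul, Finset.mul_sum, Finset.sum_mul, RCLike.inner_apply,
    conj_trivial]
  rw [Finset.sum_comm]
  exact Finset.sum_congr rfl fun j _ => Finset.sum_congr rfl fun l _ => by ring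

theorem matApply_Tmat_eq_zero {x v : EuclideanSpace ℝ (Fin (2 * n))}
    (hv : ∀ j, ⟪H.J (EuclideanSpace.single j 1) x, v⟫ = 0) : matApply (Tmat H x) v = 0 := by
  simp [matApply_Tmat, hv]

theorem matApply_Tmat_eq_starProjection {x : EuclideanSpace ℝ (Fin (2 * n))} (hx : x ≠ 0)
    (v : EuclideanSpace ℝ (Fin (2 * n))) :
    matApply (Tmat H x) v = (H.Jspan x).starProjection v := by
  refine (Submodule.eq_starProjection_of_mem_of_inner_eq_zero ?_ fun w hw => ?_).symm
  · rw [matApply_Tmat]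
    exact Submodule.smul_mem _ _ (Submodule.sum_mem _ fun j _ =>
      Submodule.smul_mem _ _ (Submodule.subset_span ⟨j, rfl⟩))
  · refine Submodule.span_induction ?_ ?_ ?_ ?_ hw
    · rintro _ ⟨i, rfl⟩
      have hx2 : ‖x‖ ^ 2 ≠ 0 := by positivity
      simp only [matApply_Tmat, inner_sub_left, inner_smul_left, sum_inner,
        H.inner_J_single_apply, RCLike.conj_to_real, mul_ite, mul_zero,
        Finset.sum_ite_eq', Finset.mem_univ, if_true]
      rw [real_inner_comm, mul_comm _ (‖x‖ ^ 2), inv_mul_cancel_left₀ hx2, sub_self]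
    · simp
    · intro w₁ w₂ _ _ h₁ h₂
      rw [inner_add_right, h₁, h₂, add_zero]
    · intro c u _ hu
      rw [inner_smul_right, hu, mul_zero]

theorem matApply_Tmat_J_apply {x : EuclideanSpace ℝ (Fin (2 * n))} (hx : x ≠ 0)
    (z : EuclideanSpace ℝ (Fin m)) : matApply (Tmat H x) (H.J z x) = H.J z x := by
  rw [matApply_Tmat_eq_starProjection H hx,
    Submodule.starProjection_eq_self_iff.mpr (H.J_apply_mem_Jspan z x)]

theorem Tmat_transpose (x : EuclideanSpace ℝ (Fin (2 * n))) : (Tmat H x).transpose = Tmat H x := by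
  ext k l
  simp only [Matrix.transpose_apply, Tmat, mul_comm]

theorem Tmat_mul_self {x : EuclideanSpace ℝ (Fin (2 * n))} (hx : x ≠ 0) :
    Tmat H x * Tmat H x = Tmat H x := by
  refine (Matrix.toLpLin 2 2).injective (LinearMap.ext fun v => ?_)
  simp only [Matrix.toLpLin_mul_same, LinearMap.comp_apply, ← matApply_eq_toLpLin,
    matApply_Tmat_eq_starProjection H hx]
  exact Submodule.starProjection_eq_self_iff.mpr (Submodule.starProjection_apply_mem _ _)

end Tmat

section Divergence

variable {n m : ℕ} (H : HTypeData n m)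

theorem HTypeData.X_comp_fst {φ : EuclideanSpace ℝ (Fin (2 * n)) → ℝ}
    {x : EuclideanSpace ℝ (Fin (2 * n))} (hφ : DifferentiableAt ℝ φ x)
    (z : EuclideanSpace ℝ (Fin m)) (l : Fin (2 * n)) :
    H.X l (fun g => φ g.1) (x, z) = fderiv ℝ φ x (EuclideanSpace.single l 1) := by
  have h : HasFDerivAt (fun g : Gp n m => φ g.1)
      ((fderiv ℝ φ x).comp (ContinuousLinearMap.fst ℝ _ _)) (x, z) :=
    hφ.hasFDerivAt.comp (x, z) hasFDerivAt_fst
  rw [HTypeData.X, h.fderiv]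
  rfl

/-- In these coordinates `T(y)_{kl} = ‖y‖⁻² Σ_j coordJ k j y * coordJ l j y`. -/
noncomputable def HTypeData.coordJ (i : Fin (2 * n)) (j : Fin m) :
    EuclideanSpace ℝ (Fin (2 * n)) →L[ℝ] ℝ :=
  (EuclideanSpace.proj i).comp (H.J (EuclideanSpace.single j 1)).toContinuousLinearMap

theorem HTypeData.abs_coordJ_apply_le (i : Fin (2 * n)) (j : Fin m)
    (y : EuclideanSpace ℝ (Fin (2 * n))) : |H.coordJ i j y| ≤ ‖y‖ :=
  calc |H.coordJ i j y| = ‖H.J (EuclideanSpace.single j 1) y i‖ := (Real.norm_eq_abs _).symm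
    _ ≤ ‖H.J (EuclideanSpace.single j 1) y‖ := PiLp.norm_apply_le _ i
    _ = ‖y‖ := by rw [H.norm_J_apply, PiLp.norm_single, norm_one, one_mul]

theorem differentiableAt_Tmat_apply {x : EuclideanSpace ℝ (Fin (2 * n))} (hx : x ≠ 0)
    (k l : Fin (2 * n)) : DifferentiableAt ℝ (fun y => Tmat H y k l) x :=
  ((hasFDerivAt_sum_mul (H.coordJ k) (H.coordJ l) x).inv_norm_sq_mul hx).differentiableAt

theorem abs_fderiv_Tmat_apply_le {x : EuclideanSpace ℝ (Fin (2 * n))} (hx : x ≠ 0)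
    (k l : Fin (2 * n)) (e : EuclideanSpace ℝ (Fin (2 * n))) :
    |fderiv ℝ (fun y => Tmat H y k l) x e| ≤ 4 * m * ‖e‖ / ‖x‖ := by
  have h := abs_fderiv_inv_norm_sq_mul_sum_le (H.coordJ k) (H.coordJ l)
    (H.abs_coordJ_apply_le k) (H.abs_coordJ_apply_le l) hx e
  rwa [Fintype.card_fin] at h

theorem abs_divT_apply_le {x : EuclideanSpace ℝ (Fin (2 * n))} (hx : x ≠ 0)
    (z : EuclideanSpace ℝ (Fin m)) (k : Fin (2 * n)) :
    |divT H (x, z) k| ≤ 2 * n * (4 * m / ‖x‖) :=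
  calc |divT H (x, z) k| = |∑ l, H.X l (fun g => Tmat H g.1 k l) (x, z)| := rfl
    _ ≤ ∑ l, |H.X l (fun g => Tmat H g.1 k l) (x, z)| := Finset.abs_sum_le_sum_abs _ _
    _ ≤ ∑ _l : Fin (2 * n), 4 * m / ‖x‖ := Finset.sum_le_sum fun l _ => by
        rw [H.X_comp_fst (differentiableAt_Tmat_apply H hx k l)]
        simpa using abs_fderiv_Tmat_apply_le H hx k l (EuclideanSpace.single l 1)
    _ = 2 * n * (4 * m / ‖x‖) := by simp

theorem norm_divT_le {x : EuclideanSpace ℝ (Fin (2 * n))} (hx : x ≠ 0)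
    (z : EuclideanSpace ℝ (Fin m)) :
    ‖divT H (x, z)‖ ≤ 3 * m * (2 * n) ^ 2 / ‖x‖ := by
  have hn : (1 : ℝ) ≤ n := by
    obtain ⟨i, -⟩ : ∃ i, x i ≠ 0 := by
      by_contra! h
      exact hx (by ext i; exact h i)
    exact_mod_cast (by have := i.isLt; omega : 1 ≤ n)
  have hsqrt : √(2 * n : ℝ) ≤ 3 / 4 * (2 * n) := by
    rw [Real.sqrt_le_left (by positivity)]
    nlinarith
  calc ‖divT H (x, z)‖ ≤ √(Fintype.card (Fin (2 * n))) * (2 * n * (4 * m / ‖x‖)) :=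
        EuclideanSpace.norm_le_sqrt_card_mul (abs_divT_apply_le H hx z)
    _ ≤ 3 / 4 * (2 * n) * (2 * n * (4 * m / ‖x‖)) := by
        rw [Fintype.card_fin, Nat.cast_mul, Nat.cast_two]
        gcongr
    _ = 3 * m * (2 * n) ^ 2 / ‖x‖ := by ring

end Divergence

section RadialFunctions

variable {n m : ℕ} (H : HTypeData n m)

noncomputable def gradX (f : Gp n m → ℝ) (g : Gp n m) : EuclideanSpace ℝ (Fin (2 * n)) :=
  toLp 2 fun i => fderiv ℝ f g (EuclideanSpace.single i 1, 0)

theorem fderiv_apply_inl_eq_inner (f : Gp n m → ℝ) (g : Gp n m)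
    (u : EuclideanSpace ℝ (Fin (2 * n))) : fderiv ℝ f g (u, 0) = ⟪gradX f g, u⟫ :=
  EuclideanSpace.apply_eq_inner ((fderiv ℝ f g).comp (ContinuousLinearMap.inl ℝ _ _)).toLinearMap u

theorem fderiv_apply_inr_eq_inner (f : Gp n m → ℝ) (g : Gp n m)
    (w : EuclideanSpace ℝ (Fin m)) : fderiv ℝ f g (0, w) = ⟪gradZ f g, w⟫ :=
  EuclideanSpace.apply_eq_inner ((fderiv ℝ f g).comp (ContinuousLinearMap.inr ℝ _ _)).toLinearMap w

theorem fderiv_apply_single_smul_bracket (f : Gp n m → ℝ) (g : Gp n m) (c : ℝ)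
    (i : Fin (2 * n)) :
    fderiv ℝ f g (EuclideanSpace.single i 1, c • H.bracket g.1 (EuclideanSpace.single i 1)) =
      gradX f g i + c * H.J (gradZ f g) g.1 i := by
  have hsplit : ((EuclideanSpace.single i 1 : EuclideanSpace ℝ (Fin (2 * n))),
      c • H.bracket g.1 (EuclideanSpace.single i 1)) =
      (EuclideanSpace.single i 1, 0) + c • (0, H.bracket g.1 (EuclideanSpace.single i 1)) := by
    simp
  rw [hsplit, map_add, map_smul, fderiv_apply_inr_eq_inner, ← H.J_apply_apply, smul_eq_mul]
  rfl

theorem HTypeData.grad_eq (f : Gp n m → ℝ) (g : Gp n m) :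
    H.grad f g = gradX f g + (1 / 2 : ℝ) • H.J (gradZ f g) g.1 := by
  ext i
  exact fderiv_apply_single_smul_bracket H f g _ i

theorem HTypeData.grad_sub_gradHat (f : Gp n m → ℝ) (g : Gp n m) :
    H.grad f g - H.gradHat f g = H.J (gradZ f g) g.1 := by
  ext i
  simp only [PiLp.sub_apply, HTypeData.grad, HTypeData.gradHat, HTypeData.X, HTypeData.Xhat,
    fderiv_apply_single_smul_bracket]
  ring

/-- Moving `x` along `u ⊥ x` changes `‖x‖` only to second order, symmetrically in `±u`. -/
theorem fderiv_apply_inl_eq_zero_of_radial {f : Gp n m → ℝ}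
    (hrad : ∃ F : ℝ → ℝ → ℝ, ∀ g : Gp n m, f g = F ‖g.1‖ ‖g.2‖)
    {x u : EuclideanSpace ℝ (Fin (2 * n))} (hxu : ⟪x, u⟫ = 0) (z : EuclideanSpace ℝ (Fin m)) :
    fderiv ℝ f (x, z) (u, 0) = 0 := by
  obtain ⟨F, hF⟩ := hrad
  refine fderiv_apply_eq_zero_of_forall_add_smul_eq_sub_smul fun t => ?_
  have hxtu : ⟪x, t • u⟫ = 0 := by rw [real_inner_smul_right, hxu, mul_zero]
  have hnorm : ‖x + t • u‖ = ‖x - t • u‖ := by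
    rw [← sq_eq_sq₀ (norm_nonneg _) (norm_nonneg _),
      norm_add_sq_real, norm_sub_sq_real, hxtu, mul_zero, add_zero, sub_zero]
  simp [hF, hnorm]

theorem matApply_Tmat_grad_of_radial {x : EuclideanSpace ℝ (Fin (2 * n))} (hx : x ≠ 0)
    {f : Gp n m → ℝ} (hrad : ∃ F : ℝ → ℝ → ℝ, ∀ g : Gp n m, f g = F ‖g.1‖ ‖g.2‖)
    (z : EuclideanSpace ℝ (Fin m)) :
    matApply (Tmat H x) (H.grad f (x, z)) = (1 / 2 : ℝ) • H.J (gradZ f (x, z)) x := by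
  have hgradX : matApply (Tmat H x) (gradX f (x, z)) = 0 :=
    matApply_Tmat_eq_zero H fun j => by
      rw [real_inner_comm, ← fderiv_apply_inl_eq_inner,
        fderiv_apply_inl_eq_zero_of_radial hrad (by rw [real_inner_comm, H.inner_J_apply_self])]
  rw [H.grad_eq, matApply_Tmat_eq_starProjection H hx, map_add, map_smul,
    ← matApply_Tmat_eq_starProjection H hx, ← matApply_Tmat_eq_starProjection H hx, hgradX,
    matApply_Tmat_J_apply H hx, zero_add]

end RadialFunctions

theorem Tmat_properties_general (n m : ℕ) (hm : 1 ≤ m) (H : HTypeData n m)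
    (x : EuclideanSpace ℝ (Fin (2 * n))) (hx : x ≠ 0) :
    ((∀ j j' : Fin m, j ≠ j' →
        ⟪H.J (EuclideanSpace.single j 1) x, H.J (EuclideanSpace.single j' 1) x⟫ = 0) ∧
      Module.finrank ℝ
        (Submodule.span ℝ
          (Set.range fun j : Fin m => H.J (EuclideanSpace.single j 1) x)) = m ∧
      matApply (Tmat H x) x = 0 ∧
      (∀ z : EuclideanSpace ℝ (Fin m), matApply (Tmat H x) (H.J z x) = H.J z x) ∧
      (∀ v : EuclideanSpace ℝ (Fin (2 * n)), matApply (Tmat H x) v ∈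
        Submodule.span ℝ
          (Set.range fun j : Fin m => H.J (EuclideanSpace.single j 1) x)) ∧
      (Tmat H x).transpose = Tmat H x ∧ Tmat H x * Tmat H x = Tmat H x ∧
      (∀ v : EuclideanSpace ℝ (Fin (2 * n)), ‖matApply (Tmat H x) v‖ ≤ ‖v‖) ∧
      (∃ v : EuclideanSpace ℝ (Fin (2 * n)), v ≠ 0 ∧ ‖matApply (Tmat H x) v‖ = ‖v‖)) ∧
    (∀ z : EuclideanSpace ℝ (Fin m),
      ‖divT H (x, z)‖ ≤ 3 * (m : ℝ) * (2 * (n : ℝ)) ^ 2 / ‖x‖) ∧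
    (∀ f : Gp n m → ℝ, ContDiff ℝ 1 f →
      (∃ F : ℝ → ℝ → ℝ, ∀ g : Gp n m, f g = F ‖g.1‖ ‖g.2‖) →
      ∀ z : EuclideanSpace ℝ (Fin m), z ≠ 0 →
        matApply (Tmat H x) (H.grad f (x, z)) =
          (1 / 2 : ℝ) • (H.grad f (x, z) - H.gradHat f (x, z)) ∧
        matApply (Tmat H x) (H.grad f (x, z)) =
          (1 / 2 : ℝ) • H.J (gradZ f (x, z)) x) := by
  refine ⟨⟨fun j j' hjj' => by rw [H.inner_J_single_apply, if_neg hjj'], H.finrank_Jspan hx,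
      matApply_Tmat_eq_zero H fun j => H.inner_J_apply_self _ x, matApply_Tmat_J_apply H hx, fun v => ?_,
      Tmat_transpose H x, Tmat_mul_self H hx, fun v => ?_, ?_⟩,
    fun z => norm_divT_le H hx z, fun f _ hrad z _ => ?_⟩
  · rw [matApply_Tmat_eq_starProjection H hx]
    exact Submodule.starProjection_apply_mem _ v
  · rw [matApply_Tmat_eq_starProjection H hx]
    exact Submodule.norm_starProjection_apply_le _ v
  · refine ⟨H.J (EuclideanSpace.single ⟨0, hm⟩ 1) x, ?_, by rw [matApply_Tmat_J_apply H hx]⟩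
    rw [← norm_ne_zero_iff, H.norm_J_apply, PiLp.norm_single, norm_one, one_mul]
    exact norm_ne_zero_iff.mpr hx
  · rw [matApply_Tmat_grad_of_radial H hx hrad, H.grad_sub_gradHat]
    exact ⟨rfl, rfl⟩

/-- Properties of `T(x)`: (i) it is the orthogonal projection onto the `m`-dimensional
subspace spanned by the mutually orthogonal vectors `J_{u_j} x`, annihilates `x`, fixes
each `J_z x`, and has operator norm `1`; (ii) `|∇·T(x)| ≤ 3m(2n)²/|x|`; (iii) for radial
`C¹` functions `f`, `T(x) ∇f(x,z) = ½(∇-∇̂)f(x,z) = ½ J_{∇_z f(x,z)} x`. -/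
theorem Tmat_properties (n m : ℕ) (hn : 1 ≤ n) (hm : 1 ≤ m) (H : HTypeData n m)
    (x : EuclideanSpace ℝ (Fin (2 * n))) (hx : x ≠ 0) :
    ((∀ j j' : Fin m, j ≠ j' →
        ⟪H.J (EuclideanSpace.single j 1) x, H.J (EuclideanSpace.single j' 1) x⟫ = 0) ∧
      Module.finrank ℝ
        (Submodule.span ℝ
          (Set.range fun j : Fin m => H.J (EuclideanSpace.single j 1) x)) = m ∧
      matApply (Tmat H x) x = 0 ∧
      (∀ z : EuclideanSpace ℝ (Fin m), matApply (Tmat H x) (H.J z x) = H.J z x) ∧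
      (∀ v : EuclideanSpace ℝ (Fin (2 * n)), matApply (Tmat H x) v ∈
        Submodule.span ℝ
          (Set.range fun j : Fin m => H.J (EuclideanSpace.single j 1) x)) ∧
      (Tmat H x).transpose = Tmat H x ∧ Tmat H x * Tmat H x = Tmat H x ∧
      (∀ v : EuclideanSpace ℝ (Fin (2 * n)), ‖matApply (Tmat H x) v‖ ≤ ‖v‖) ∧
      (∃ v : EuclideanSpace ℝ (Fin (2 * n)), v ≠ 0 ∧ ‖matApply (Tmat H x) v‖ = ‖v‖)) ∧
    (∀ z : EuclideanSpace ℝ (Fin m),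
      ‖divT H (x, z)‖ ≤ 3 * (m : ℝ) * (2 * (n : ℝ)) ^ 2 / ‖x‖) ∧
    (∀ f : Gp n m → ℝ, ContDiff ℝ 1 f →
      (∃ F : ℝ → ℝ → ℝ, ∀ g : Gp n m, f g = F ‖g.1‖ ‖g.2‖) →
      ∀ z : EuclideanSpace ℝ (Fin m), z ≠ 0 →
        matApply (Tmat H x) (H.grad f (x, z)) =
          (1 / 2 : ℝ) • (H.grad f (x, z) - H.gradHat f (x, z)) ∧
        matApply (Tmat H x) (H.grad f (x, z)) =
          (1 / 2 : ℝ) • H.J (gradZ f (x, z)) x) :=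
  Tmat_properties_general n m hm H x hx
end
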